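/- arXiv:2503.19895 — 8 statements merged into one kernel-verified Lean document; each statement's English description precedes it below -/
import Mathlib

section
/- Let p > 1 be an integer, q = p/(p-1), and define ρ_p(x) = -(1/π) ∑_{j=0}^{p-1} C(p-1,j) (-1)^j sin(jπ/q) (1-x)^{j/q} x^{p-1-j/q} for x ∈ [0,1]. Then ρ_p(x) > 0 for all x ∈ (0,1). -/
theorem stmt_3 (p : ℕ) (hp : 1 < p) (q : ℝ) (hq : q = (p : ℝ) / ((p : ℝ) - 1))
    (ρ : ℝ → ℝ)
    (hρ : ∀ x ∈ Set.Icc (0 : ℝ) 1, ρ x =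
      -(1 / Real.pi) * ∑ j ∈ Finset.range p, ((p - 1).choose j : ℝ) * (-1) ^ j *
        Real.sin ((j : ℝ) * Real.pi / q) * (1 - x) ^ ((j : ℝ) / q) *
        x ^ ((p : ℝ) - 1 - (j : ℝ) / q)) :
    ∀ x ∈ Set.Ioo (0 : ℝ) 1, 0 < ρ x := by
  intro x hx
  obtain ⟨hx0, hx1⟩ := hx
  rw [hρ x ⟨hx0.le, hx1.le⟩]
  have hπ : (0:ℝ) < Real.pi := Real.pi_pos
  have hp1 : (1:ℝ) < (p:ℝ) := by exact_mod_cast hp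
  have hp0 : (0:ℝ) < (p:ℝ) := by linarith
  have hsin : ∀ j : ℕ, Real.sin ((j : ℝ) * Real.pi / q) =
      -((-1:ℝ)^j * Real.sin ((j : ℝ) * Real.pi / p)) := by
    intro j
    have harg : (j : ℝ) * Real.pi / q = (j : ℝ) * Real.pi - (j : ℝ) * Real.pi / p := by
      rw [hq]; field_simp
    rw [harg, Real.sin_nat_mul_pi_sub]
  have hrw : -(1 / Real.pi) * ∑ j ∈ Finset.range p, ((p - 1).choose j : ℝ) * (-1) ^ j *
        Real.sin ((j : ℝ) * Real.pi / q) * (1 - x) ^ ((j : ℝ) / q) *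
        x ^ ((p : ℝ) - 1 - (j : ℝ) / q)
      = ∑ j ∈ Finset.range p, (1 / Real.pi) * (((p - 1).choose j : ℝ) *
        Real.sin ((j : ℝ) * Real.pi / p) * ((1 - x) ^ ((j : ℝ) / q) *
        x ^ ((p : ℝ) - 1 - (j : ℝ) / q))) := by
    rw [neg_mul, Finset.mul_sum, ← Finset.sum_neg_distrib]
    refine Finset.sum_congr rfl fun j _ => ?_
    rw [hsin j]
    have h2 : ((-1:ℝ)^j) * ((-1:ℝ)^j) = 1 := by
      rw [← mul_pow]; norm_num
    linear_combination (1 / Real.pi * ((p - 1).choose j : ℝ) *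
      Real.sin ((j : ℝ) * Real.pi / p) * ((1 - x) ^ ((j : ℝ) / q)) *
      (x ^ ((p : ℝ) - 1 - (j : ℝ) / q))) * h2
  rw [hrw]
  apply Finset.sum_pos'
  · intro j hj
    have hjp : (j : ℝ) ≤ (p : ℝ) := by
      exact_mod_cast (Finset.mem_range.mp hj).le
    have hs : 0 ≤ Real.sin ((j : ℝ) * Real.pi / p) := by
      apply Real.sin_nonneg_of_nonneg_of_le_pi
      · positivity
      · rw [div_le_iff₀ hp0]; nlinarith
    have h1 : (0:ℝ) ≤ (1 - x) ^ ((j : ℝ) / q) := Real.rpow_nonneg (by linarith) _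
    have h2 : (0:ℝ) ≤ x ^ ((p : ℝ) - 1 - (j : ℝ) / q) := Real.rpow_nonneg hx0.le _
    have hc : (0:ℝ) ≤ ((p - 1).choose j : ℝ) := by positivity
    positivity
  · refine ⟨1, Finset.mem_range.mpr hp, ?_⟩
    have hs : 0 < Real.sin ((1 : ℝ) * Real.pi / p) := by
      apply Real.sin_pos_of_pos_of_lt_pi
      · positivity
      · rw [one_mul, div_lt_iff₀ hp0]; nlinarith
    have hc : (0:ℝ) < ((p - 1).choose 1 : ℝ) := by
      rw [Nat.choose_one_right]
      have : 1 ≤ p - 1 := by omega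
      exact_mod_cast Nat.lt_of_lt_of_le Nat.zero_lt_one this
    have h1 : (0:ℝ) < (1 - x) ^ ((1 : ℝ) / q) := Real.rpow_pos_of_pos (by linarith) _
    have h2 : (0:ℝ) < x ^ ((p : ℝ) - 1 - (1 : ℝ) / q) := Real.rpow_pos_of_pos hx0 _
    push_cast
    positivity
end

section
/- Let p > 1 and q = p/(p-1). Define f_p(z) = z^{p-1}[((1+1/z)^{1/q} - 1)^{p-1} - (1 - (1-1/z)^{1/q})^{p-1}] for z in the upper half-plane, using principal branches of complex powers. Then f_p(-z) = -f_p(z) for all z with Im z > 0, where f_p on the lower half-plane is defined by the same formula. -/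
/-! Negating `z` turns `Arg z` into `Arg z ± π` (`+` in the lower and `-` in the upper
half-plane), so `(-z) ^ s = z ^ s * exp (± π s i)`.  The powers `(1 ± 1/z) ^ (1/q)` stay in
the half-plane of `1 ± 1/z`, so both brackets of `f_p(z)` lie in the lower half-plane while `z`
lies in the upper one; the two phase factors produced by `z ↦ -z` therefore cancel, and what
remains is the swap of the two brackets. -/

open Complex

/-- The function `f_p` from the optimal discrete `p`-Hardy weight, with principal
branch complex powers. -/
noncomputable def fp (p q : ℝ) (z : ℂ) : ℂ :=
  z ^ ((p - 1 : ℝ) : ℂ) *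
    (((1 + 1 / z) ^ ((1 / q : ℝ) : ℂ) - 1) ^ ((p - 1 : ℝ) : ℂ) -
      (1 - (1 - 1 / z) ^ ((1 / q : ℝ) : ℂ)) ^ ((p - 1 : ℝ) : ℂ))

namespace Complex

theorem neg_cpow_of_im_neg {w : ℂ} (hw : w.im < 0) (s : ℂ) :
    (-w) ^ s = w ^ s * exp (Real.pi * s * I) := by
  have hw0 : w ≠ 0 := fun h => by simp [h] at hw
  rw [cpow_def_of_ne_zero (neg_ne_zero.2 hw0), cpow_def_of_ne_zero hw0, ← exp_add, log, log,
    norm_neg, arg_neg_eq_arg_add_pi_of_im_neg hw]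
  push_cast
  ring_nf

theorem neg_cpow_of_im_pos {w : ℂ} (hw : 0 < w.im) (s : ℂ) :
    (-w) ^ s = w ^ s * exp (-(Real.pi * s * I)) := by
  have h := neg_cpow_of_im_neg (w := -w) (by simpa using hw) s
  rw [neg_neg] at h
  rw [h, mul_assoc, ← exp_add, add_neg_cancel, exp_zero, mul_one]

theorem neg_cpow_mul_neg_cpow {z w : ℂ} (hz : 0 < z.im) (hw : w.im < 0) (s : ℂ) :
    (-z) ^ s * (-w) ^ s = z ^ s * w ^ s := by
  rw [neg_cpow_of_im_pos hz, neg_cpow_of_im_neg hw,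
    mul_mul_mul_comm, ← exp_add, neg_add_cancel, exp_zero, mul_one]

theorem im_cpow_ofReal_neg {w : ℂ} (hw : w.im < 0) {t : ℝ} (ht₀ : 0 < t) (ht₁ : t ≤ 1) :
    (w ^ (t : ℂ)).im < 0 := by
  have hw0 : w ≠ 0 := fun h => by simp [h] at hw
  have harg := arg_neg_iff.2 hw
  rw [cpow_ofReal_im]
  refine mul_neg_of_pos_of_neg (by positivity) (Real.sin_neg_of_neg_of_neg_pi_lt
    (mul_neg_of_neg_of_pos harg ht₀) ?_)
  nlinarith [neg_pi_lt_arg w]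

theorem im_cpow_ofReal_pos {w : ℂ} (hw : 0 < w.im) {t : ℝ} (ht₀ : 0 < t) (ht₁ : t ≤ 1) :
    0 < (w ^ (t : ℂ)).im := by
  have hw0 : w ≠ 0 := fun h => by simp [h] at hw
  have harg : 0 < arg w :=
    (arg_nonneg_iff.2 hw.le).lt_of_ne fun h => hw.ne' (arg_eq_zero_iff.1 h.symm).2
  have harg' : arg w < Real.pi := arg_lt_pi_iff.2 (Or.inr hw.ne')
  rw [cpow_ofReal_im]
  exact mul_pos (by positivity) (Real.sin_pos_of_pos_of_lt_pi (mul_pos harg ht₀) (by nlinarith))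

end Complex

theorem stmt_7 (p : ℝ) (hp : 1 < p) (q : ℝ) (hq : q = p / (p - 1)) :
    ∀ z : ℂ, 0 < z.im → fp p q (-z) = -fp p q z := by
  intro z hz
  have hq₁ : 1 < q := by rw [hq, lt_div_iff₀ (by linarith)]; linarith
  have ht₀ : 0 < 1 / q := by positivity
  have ht₁ : 1 / q ≤ 1 := (div_le_one (by linarith)).2 hq₁.le
  have hinv : (1 / z).im < 0 := by
    rw [one_div, inv_im]
    exact div_neg_of_neg_of_pos (neg_neg_of_pos hz) (normSq_pos.2 fun h => by simp [h] at hz)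
  set a := (1 + 1 / z) ^ ((1 / q : ℝ) : ℂ) - 1
  set b := 1 - (1 - 1 / z) ^ ((1 / q : ℝ) : ℂ)
  have ha : a.im < 0 := by
    simpa [a] using im_cpow_ofReal_neg (w := 1 + 1 / z) (by simpa using hinv) ht₀ ht₁
  have hb : b.im < 0 := by
    simpa [b] using im_cpow_ofReal_pos (w := 1 - 1 / z) (by simpa using hinv) ht₀ ht₁
  have hfp_neg : fp p q (-z) = (-z) ^ ((p - 1 : ℝ) : ℂ) *
      ((-b) ^ ((p - 1 : ℝ) : ℂ) - (-a) ^ ((p - 1 : ℝ) : ℂ)) := by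
    simp only [fp, a, b, div_neg, neg_sub, sub_neg_eq_add, ← sub_eq_add_neg]
  rw [hfp_neg, fp, mul_sub, neg_cpow_mul_neg_cpow hz hb, neg_cpow_mul_neg_cpow hz ha]
  ring
end

section
/- Let p > 1 and q = p/(p-1). For z in the upper half-plane ℂ₊ (Im z > 0), both 1 - (1 - 1/z)^{1/q} and (1 + 1/z)^{1/q} - 1 lie in the lower half-plane ℂ₋ (have negative imaginary part), where the power uses the principal branch. -/
open Complex

lemma aux_pow_im_pos {w : ℂ} {α : ℝ} (hα : 0 < α) (hα1 : α ≤ 1) (hw : 0 < w.im) :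
    0 < (w ^ (α : ℂ)).im := by
  have hw0 : w ≠ 0 := fun h => by simp [h] at hw
  rw [Complex.cpow_def_of_ne_zero hw0, Complex.exp_im]
  have him : (Complex.log w * (α : ℂ)).im = α * w.arg := by
    simp [Complex.log_im, mul_comm]
  rw [him]
  have harg : 0 < w.arg := by
    refine lt_of_le_of_ne (Complex.arg_nonneg_iff.2 hw.le) (fun h => ?_)
    exact hw.ne' (Complex.arg_eq_zero_iff.1 h.symm).2
  have harg2 : w.arg < Real.pi := by
    rw [Complex.arg_lt_pi_iff]; right; exact hw.ne'
  have : 0 < Real.sin (α * w.arg) := by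
    apply Real.sin_pos_of_pos_of_lt_pi (by positivity)
    calc α * w.arg ≤ 1 * w.arg := by nlinarith
    _ < Real.pi := by linarith
  positivity

lemma aux_pow_im_neg {w : ℂ} {α : ℝ} (hα : 0 < α) (hα1 : α ≤ 1) (hw : w.im < 0) :
    (w ^ (α : ℂ)).im < 0 := by
  have hw0 : w ≠ 0 := fun h => by simp [h] at hw
  rw [Complex.cpow_def_of_ne_zero hw0, Complex.exp_im]
  have him : (Complex.log w * (α : ℂ)).im = α * w.arg := by
    simp [Complex.log_im, mul_comm]
  rw [him]
  have harg : w.arg < 0 := Complex.arg_neg_iff.2 hw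
  have harg2 : -Real.pi < w.arg := Complex.neg_pi_lt_arg w
  have hs : Real.sin (α * w.arg) < 0 := by
    apply Real.sin_neg_of_neg_of_neg_pi_lt (by nlinarith)
    calc -Real.pi < 1 * w.arg := by linarith
    _ ≤ α * w.arg := by nlinarith
  have := Real.exp_pos (Complex.log w * (α : ℂ)).re
  nlinarith

theorem stmt_9 (p : ℝ) (hp : 1 < p) (q : ℝ) (hq : q = p / (p - 1)) :
    ∀ z : ℂ, 0 < z.im →
      (1 - (1 - 1 / z) ^ ((1 / q : ℝ) : ℂ)).im < 0 ∧
      ((1 + 1 / z) ^ ((1 / q : ℝ) : ℂ) - 1).im < 0 := by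
  intro z hz
  have hq1 : 1 < q := by
    rw [hq, lt_div_iff₀ (by linarith)]; linarith
  have hα : 0 < 1 / q := by positivity
  have hα1 : (1 : ℝ) / q ≤ 1 := by
    rw [div_le_one (by linarith)]; linarith
  have hz0 : z ≠ 0 := fun h => by simp [h] at hz
  have hinv : (1 / z).im < 0 := by
    rw [one_div, Complex.inv_im]
    have : 0 < Complex.normSq z := Complex.normSq_pos.2 hz0
    exact div_neg_of_neg_of_pos (by linarith) this
  constructor
  · have h1 : (0:ℝ) < (1 - 1 / z).im := by
      simp only [sub_im, one_im]; linarith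
    have := aux_pow_im_pos hα hα1 h1
    simp only [sub_im, one_im]
    linarith
  · have h2 : (1 + 1 / z).im < 0 := by
      simp only [add_im, one_im]; linarith
    have := aux_pow_im_neg hα hα1 h2
    simp only [sub_im, one_im]
    linarith
end

section
/- Let p > 1 and q = p/(p-1). The function f_p(z) = (z(1+1/z)^{1/q} - z)^{p-1} - (z - z(1-1/z)^{1/q})^{p-1} (principal branches) satisfies f_p(z) = -((p-1)/p)^p · (1/z) + O(1/z²) as z → ∞ in ℂ₊ ∪ (1,∞). -/
/-!
Put `w = 1/z`, `α = 1/q = (p-1)/p` and let `A(w) = ((1 + w)^α - 1)/w`, the difference quotient of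
the analytic function `(1 + w)^α` at `0`. Then `z(1 + 1/z)^α - z = A(w)` and
`z - z(1 - 1/z)^α = A(-w)`, so `f_p(z) = F(w)` with `F(w) = A(w)^(p-1) - A(-w)^(p-1)`.
Since `A(0) = α > 0`, the principal power is analytic there, so `F` is analytic at `0` with
`F(0) = 0`, whence `f_p(z) = F'(0)/z + O(1/z²)`. Finally `A'(0) = α(α-1)/2` gives
`F'(0) = (p-1)(α-1)α^(p-1) = -((p-1)/p)^p`.
-/

open Complex

/-- The function `f_p` in the alternative form valid on `ℂ₊ ∪ (1,∞)`. -/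
noncomputable def fpAlt (p q : ℝ) (z : ℂ) : ℂ :=
  (z * (1 + 1 / z) ^ ((1 / q : ℝ) : ℂ) - z) ^ ((p - 1 : ℝ) : ℂ) -
    (z - z * (1 - 1 / z) ^ ((1 / q : ℝ) : ℂ)) ^ ((p - 1 : ℝ) : ℂ)

section

variable {E : Type*} [NormedAddCommGroup E] [NormedSpace ℂ E]

theorem AnalyticAt.dslope {G : ℂ → E} {a : ℂ} (hG : AnalyticAt ℂ G a) :
    AnalyticAt ℂ (dslope G a) a :=
  let ⟨_, hP⟩ := hG
  ⟨_, hP.has_fpower_series_dslope_fslope⟩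

theorem deriv_dslope_self [CompleteSpace E] {G : ℂ → E} {a : ℂ} (hG : AnalyticAt ℂ G a) :
    deriv (dslope G a) a = (2 : ℂ)⁻¹ • deriv (deriv G) a := by
  obtain ⟨P, hP⟩ := hG
  have hslope : deriv (dslope G a) a = P.fslope.coeff 1 := by
    simpa [FormalMultilinearSeries.apply_eq_pow_smul_coeff] using
      hP.has_fpower_series_dslope_fslope.deriv
  obtain ⟨r, hr⟩ := hP
  have hiter : deriv (deriv G) a = iteratedFDeriv ℂ 2 G a (fun _ => 1) := by
    rw [← iteratedDeriv_eq_iteratedFDeriv, iteratedDeriv_succ, iteratedDeriv_one]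
  rw [hslope, FormalMultilinearSeries.coeff_fslope, hiter, ← hr.factorial_smul (1 : ℂ) 2]
  simp [Nat.factorial, ← Nat.cast_smul_eq_nsmul ℂ, smul_smul]

theorem exists_norm_comp_inv_sub_smul_deriv_le {F : ℂ → E} (hF : AnalyticAt ℂ F 0)
    (hF0 : F 0 = 0) :
    ∃ C > 0, ∃ R > 0, ∀ z : ℂ, R < ‖z‖ → ‖F z⁻¹ - z⁻¹ • deriv F 0‖ ≤ C / ‖z‖ ^ 2 := by
  obtain ⟨C, hC, hCΨ⟩ := hF.dslope.differentiableAt.hasDerivAt.isBigO_sub.exists_pos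
  obtain ⟨δ, hδ, hδΨ⟩ := Metric.eventually_nhds_iff.1 hCΨ.bound
  refine ⟨C, hC, δ⁻¹, inv_pos.2 hδ, fun z hz => ?_⟩
  have hz0 : 0 < ‖z‖ := (inv_pos.2 hδ).trans hz
  have hw : dist z⁻¹ 0 < δ := by
    rw [dist_zero_right, norm_inv]
    exact inv_lt_of_inv_lt₀ hδ hz
  have hFz : F z⁻¹ - z⁻¹ • deriv F 0 = z⁻¹ • (dslope F 0 z⁻¹ - dslope F 0 0) := by
    have hsmul := sub_smul_dslope F 0 z⁻¹
    rw [sub_zero, hF0, sub_zero] at hsmul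
    rw [smul_sub, dslope_same, hsmul]
  calc ‖F z⁻¹ - z⁻¹ • deriv F 0‖ = ‖z‖⁻¹ * ‖dslope F 0 z⁻¹ - dslope F 0 0‖ := by
        rw [hFz, norm_smul, norm_inv]
    _ ≤ ‖z‖⁻¹ * (C * ‖z‖⁻¹) := by
        gcongr
        simpa [norm_inv, dslope_same] using hδΨ hw
    _ = C / ‖z‖ ^ 2 := by field_simp

end

section binomialSlope

variable (α : ℂ)

theorem analyticAt_one_add_cpow : AnalyticAt ℂ (fun w : ℂ => (1 + w) ^ α) 0 :=
  (analyticAt_const.add analyticAt_id).cpow analyticAt_const (by simp)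

theorem hasDerivAt_one_add_cpow {w : ℂ} (hw : 1 + w ∈ slitPlane) :
    HasDerivAt (fun w : ℂ => (1 + w) ^ α) (α * (1 + w) ^ (α - 1)) w := by
  simpa using ((hasDerivAt_id w).const_add 1).cpow_const hw

theorem deriv_deriv_one_add_cpow_zero :
    deriv (deriv fun w : ℂ => (1 + w) ^ α) 0 = α * (α - 1) := by
  have hnear : ∀ᶠ w : ℂ in nhds 0, 1 + w ∈ slitPlane :=
    (continuous_const.add continuous_id).continuousAt.eventually_mem
      (isOpen_slitPlane.mem_nhds (by simp))
  have hderiv : deriv (fun w : ℂ => (1 + w) ^ α) =ᶠ[nhds 0] fun w => α * (1 + w) ^ (α - 1) := by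
    filter_upwards [hnear] with w hw
    exact (hasDerivAt_one_add_cpow α hw).deriv
  rw [hderiv.deriv_eq, ((hasDerivAt_one_add_cpow (α - 1) (by simp)).const_mul α).deriv]
  simp

noncomputable def binomialSlope : ℂ → ℂ := dslope (fun w : ℂ => (1 + w) ^ α) 0

theorem analyticAt_binomialSlope : AnalyticAt ℂ (binomialSlope α) 0 :=
  (analyticAt_one_add_cpow α).dslope

theorem binomialSlope_zero : binomialSlope α 0 = α := by
  simp [binomialSlope, (hasDerivAt_one_add_cpow α (w := 0) (by simp)).deriv]

theorem hasDerivAt_binomialSlope : HasDerivAt (binomialSlope α) (α * (α - 1) / 2) 0 := by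
  have hderiv : deriv (binomialSlope α) 0 = α * (α - 1) / 2 := by
    rw [binomialSlope, deriv_dslope_self (analyticAt_one_add_cpow α),
      deriv_deriv_one_add_cpow_zero, smul_eq_mul]
    ring
  exact hderiv ▸ (analyticAt_binomialSlope α).differentiableAt.hasDerivAt

theorem binomialSlope_inv {z : ℂ} (hz : z ≠ 0) :
    binomialSlope α z⁻¹ = z * (1 + 1 / z) ^ α - z := by
  rw [binomialSlope, dslope_of_ne _ (inv_ne_zero hz), slope_def_field]
  simp only [add_zero, one_cpow, sub_zero, one_div, div_inv_eq_mul]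
  ring

theorem binomialSlope_neg_inv {z : ℂ} (hz : z ≠ 0) :
    binomialSlope α (-z⁻¹) = z - z * (1 - 1 / z) ^ α := by
  rw [binomialSlope, dslope_of_ne _ (neg_ne_zero.2 (inv_ne_zero hz)), slope_def_field]
  simp only [add_zero, one_cpow, sub_zero, one_div, div_neg, ← sub_eq_add_neg, div_inv_eq_mul]
  ring

end binomialSlope

section binomialSlopeDiff

variable (α ρ : ℂ)

noncomputable def binomialSlopeDiff (w : ℂ) : ℂ :=
  binomialSlope α w ^ ρ - binomialSlope α (-w) ^ ρ

theorem binomialSlopeDiff_zero : binomialSlopeDiff α ρ 0 = 0 := by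
  simp [binomialSlopeDiff]

variable {α}

theorem analyticAt_binomialSlopeDiff (hα : α ∈ slitPlane) :
    AnalyticAt ℂ (binomialSlopeDiff α ρ) 0 := by
  have hA := analyticAt_binomialSlope α
  have hα' : binomialSlope α (-0) ∈ slitPlane := by rwa [neg_zero, binomialSlope_zero]
  exact (hA.cpow analyticAt_const (neg_zero (G := ℂ) ▸ hα')).sub
    ((hA.comp_of_eq analyticAt_id.neg neg_zero).cpow analyticAt_const hα')

theorem hasDerivAt_binomialSlopeDiff (hα : α ∈ slitPlane) :
    HasDerivAt (binomialSlopeDiff α ρ) (ρ * (α - 1) * α ^ ρ) 0 := by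
  have hA := hasDerivAt_binomialSlope α
  have hAneg : HasDerivAt (fun w => binomialSlope α (-w)) (-(α * (α - 1) / 2)) 0 := by
    have h := hA.comp_of_eq 0 (hasDerivAt_neg 0) neg_zero.symm
    rw [mul_neg_one] at h
    exact h
  have hA0 : binomialSlope α 0 ∈ slitPlane := by rwa [binomialSlope_zero]
  have h := (hA.cpow_const (c := ρ) hA0).sub (hAneg.cpow_const (c := ρ) (by rwa [neg_zero]))
  refine h.congr_deriv ?_
  have hα0 : α ≠ 0 := slitPlane_ne_zero hα
  simp only [neg_zero, binomialSlope_zero, cpow_sub _ _ hα0, cpow_one]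
  field_simp
  ring

theorem fpAlt_eq_binomialSlopeDiff (p q : ℝ) {z : ℂ} (hz : z ≠ 0) :
    fpAlt p q z = binomialSlopeDiff ((1 / q : ℝ) : ℂ) ((p - 1 : ℝ) : ℂ) z⁻¹ := by
  rw [fpAlt, binomialSlopeDiff, binomialSlope_inv _ hz, binomialSlope_neg_inv _ hz]

end binomialSlopeDiff

theorem sub_one_mul_rpow_conj_exponent {p : ℝ} (hp : 1 < p) :
    (p - 1) * ((p - 1) / p - 1) * ((p - 1) / p) ^ (p - 1) = -((p - 1) / p) ^ p := by
  have hp0 : p ≠ 0 := by positivity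
  have hp1 : p - 1 ≠ 0 := by linarith
  have hc : (p - 1) / p ≠ 0 := div_ne_zero hp1 hp0
  have hlin : (p - 1) * ((p - 1) / p - 1) = -((p - 1) / p) := by
    field_simp
    ring
  rw [hlin, Real.rpow_sub_one hc]
  field_simp

theorem stmt_10 (p : ℝ) (hp : 1 < p) (q : ℝ) (hq : q = p / (p - 1)) :
    ∃ C > (0 : ℝ), ∃ R > (0 : ℝ), ∀ z : ℂ,
      (0 < z.im ∨ (z.im = 0 ∧ 1 < z.re)) → R < ‖z‖ →
      ‖fpAlt p q z + (((p - 1) / p) ^ p : ℝ) / z‖ ≤ C / (‖z‖) ^ 2 := by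
  have hα : ((1 / q : ℝ) : ℂ) = (((p - 1) / p : ℝ) : ℂ) := by rw [hq, one_div_div]
  have hslit : ((1 / q : ℝ) : ℂ) ∈ slitPlane :=
    hα ▸ ofReal_mem_slitPlane.2 (div_pos (by linarith) (by linarith))
  set F := binomialSlopeDiff ((1 / q : ℝ) : ℂ) ((p - 1 : ℝ) : ℂ)
  have hderiv : deriv F 0 = -(((p - 1) / p) ^ p : ℝ) := by
    rw [(hasDerivAt_binomialSlopeDiff _ hslit).deriv, hα, ← ofReal_one, ← ofReal_sub,
      ← ofReal_cpow (by positivity), ← ofReal_mul, ← ofReal_mul, sub_one_mul_rpow_conj_exponent hp,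
      ofReal_neg]
  obtain ⟨C, hC, R, hR, hbound⟩ := exists_norm_comp_inv_sub_smul_deriv_le
    (analyticAt_binomialSlopeDiff _ hslit) (binomialSlopeDiff_zero _ _)
  refine ⟨C, hC, R, hR, fun z _ hz => ?_⟩
  have hz0 : z ≠ 0 := norm_pos_iff.1 (hR.trans hz)
  have hexpand : fpAlt p q z + (((p - 1) / p) ^ p : ℝ) / z = F z⁻¹ - z⁻¹ • deriv F 0 := by
    rw [fpAlt_eq_binomialSlopeDiff p q hz0, hderiv, smul_eq_mul]
    ring
  exact hexpand ▸ hbound z hz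
end

section
/- Let p ≥ 2 be real and q = p/(p-1). For every t > 0, one has sin((p-1)·Arg(1 - e^{iπ/q} t)) < 0. -/
/-!
With `θ = π / q = (p - 1) π / p ∈ (0, π)`, the point `z = 1 - e^{iθ} t` lies in the lower
half-plane, so `arg z < 0`. Writing `z = e^{iθ} (e^{-iθ} - t)` with the second factor also in the
lower half-plane gives `arg z > θ - π`. Multiplying by `p - 1` puts `(p - 1) arg z` in
`((p - 1)(θ - π), 0) = (-θ, 0) ⊆ (-π, 0)`, where the sine is negative.
-/

open Complex

variable {θ t : ℝ}

lemma arg_one_sub_exp_mul_I_mul_neg (hθ₀ : 0 < θ) (hθ : θ < Real.pi) (ht : 0 < t) :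
    arg (1 - exp (θ * I) * t) < 0 := by
  rw [arg_neg_iff, exp_mul_I, ← ofReal_cos, ← ofReal_sin]
  simp only [sub_im, one_im, mul_im, add_re, add_im, ofReal_re, ofReal_im, mul_re, I_re, I_im]
  nlinarith [Real.sin_pos_of_pos_of_lt_pi hθ₀ hθ]

lemma sub_pi_lt_arg_one_sub_exp_mul_I_mul (hθ₀ : 0 < θ) (hθ : θ < Real.pi) :
    θ - Real.pi < arg (1 - exp (θ * I) * t) := by
  set w : ℂ := exp (-θ * I) - t
  have hw : w.im < 0 := by
    simp only [w, sub_im, exp_mul_I, ← ofReal_neg, ← ofReal_cos, ← ofReal_sin, add_im, ofReal_im,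
      mul_im, ofReal_re, I_re, I_im]
    nlinarith [Real.sin_pos_of_pos_of_lt_pi hθ₀ hθ, Real.sin_neg θ]
  have hargw : -Real.pi < arg w ∧ arg w < 0 := ⟨neg_pi_lt_arg w, arg_neg_iff.2 hw⟩
  have hargθ : arg (exp (θ * I)) = θ := by
    rw [exp_mul_I, arg_cos_add_sin_mul_I ⟨by linarith, hθ.le⟩]
  have hsplit : 1 - exp (θ * I) * t = exp (θ * I) * w := by
    rw [mul_sub, ← exp_add, show (θ : ℂ) * I + -θ * I = 0 by ring, exp_zero]
  rw [hsplit, arg_mul (exp_ne_zero _) (by rintro h; simp [h] at hw), hargθ]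
  · linarith
  · rw [hargθ]; constructor <;> linarith

theorem stmt_11 (p : ℝ) (hp : 2 ≤ p) (q : ℝ) (hq : q = p / (p - 1)) :
    ∀ t : ℝ, 0 < t →
      Real.sin ((p - 1) * Complex.arg (1 - Complex.exp (Real.pi / q * I) * t)) < 0 := by
  intro t ht
  have hp₁ : 0 < p - 1 := by linarith
  set θ : ℝ := (p - 1) / p * Real.pi with hθ
  have hθq : (Real.pi / q : ℂ) = θ := by
    rw [hq, hθ]; push_cast; field_simp
  have hθ₀ : 0 < θ := by have := Real.pi_pos; positivity
  have hθπ : θ < Real.pi := by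
    rw [hθ, div_mul_eq_mul_div, div_lt_iff₀ (by linarith)]; nlinarith [Real.pi_pos]
  rw [hθq]
  refine Real.sin_neg_of_neg_of_neg_pi_lt
    (mul_neg_of_pos_of_neg hp₁ (arg_one_sub_exp_mul_I_mul_neg hθ₀ hθπ ht)) ?_
  calc -Real.pi < -θ := by linarith
    _ = (p - 1) * (θ - Real.pi) := by rw [hθ]; field_simp; ring
    _ < (p - 1) * arg (1 - exp (θ * I) * t) :=
      mul_lt_mul_of_pos_left (sub_pi_lt_arg_one_sub_exp_mul_I_mul hθ₀ hθπ) hp₁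
end

section
/- Let 1 < p < 2 be real and q = p/(p-1). For every t > 0, one has sin((p-1)·Arg(1 - e^{iπ/q} t)) < 0. -/
open Complex

theorem stmt_12 (p : ℝ) (hp1 : 1 < p) (hp2 : p < 2) (q : ℝ) (hq : q = p / (p - 1)) :
    ∀ t : ℝ, 0 < t →
      Real.sin ((p - 1) * Complex.arg (1 - Complex.exp (Real.pi / q * I) * t)) < 0 := by
  intro t ht
  have hp1' : (0:ℝ) < p - 1 := by linarith
  have hθ : Real.pi / q = Real.pi * (p - 1) / p := by
    rw [hq]; field_simp
  have hθpos : 0 < Real.pi / q := by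
    rw [hθ]
    positivity
  have hθlt : Real.pi / q < Real.pi := by
    rw [hθ]
    rw [div_lt_iff₀ (by linarith)]
    nlinarith [Real.pi_pos]
  have hsin : 0 < Real.sin (Real.pi / q) := Real.sin_pos_of_pos_of_lt_pi hθpos hθlt
  set z : ℂ := 1 - Complex.exp (Real.pi / q * I) * t with hz
  have him : z.im = -(Real.sin (Real.pi / q) * t) := by
    simp [hz, Complex.exp_mul_I, ← Complex.ofReal_div, Complex.cos_ofReal_im, Complex.sin_ofReal_re,
      Complex.add_im, Complex.mul_im]
  have him' : z.im < 0 := by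
    rw [him]
    nlinarith
  have harg : z.arg < 0 := Complex.arg_neg_iff.mpr him'
  have harg' : -Real.pi < z.arg := Complex.neg_pi_lt_arg z
  have h1 : (p - 1) * z.arg < 0 := mul_neg_of_pos_of_neg hp1' harg
  have h2 : -Real.pi < (p - 1) * z.arg := by nlinarith [Real.pi_pos]
  have := Real.sin_pos_of_pos_of_lt_pi (x := -((p - 1) * z.arg)) (by linarith) (by linarith)
  rw [Real.sin_neg] at this
  linarith
end

section
/- Let p > 1 and q = p/(p-1). Define ρ_p(x) = -(1/π) x^{p-1} Im((1 - e^{iπ/q}(1/x - 1)^{1/q})^{p-1}) for x ∈ (0,1), using the principal branch of the complex power. Then ρ_p(x) > 0 for all x ∈ (0,1). -/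
/-! With `θ = π / q`, the point `z = 1 - r e^{iθ}` (`r > 0`) lies on the open ray from `1` in the
direction `e^{i(θ - π)}`, so `θ - π < arg z < 0`. Since `(p - 1)(θ - π) = -π / q > -π`, the
principal power `z^{p-1} = |z|^{p-1} e^{i (p-1) arg z}` lies in the lower half-plane, and
`ρ_p(x) = -(1/π) x^{p-1} Im z^{p-1} > 0`. -/

open Complex

namespace Complex

lemma arg_exp_mul_I_of_mem_Ioc {θ : ℝ} (hθ : θ ∈ Set.Ioc (-Real.pi) Real.pi) :
    arg (exp (θ * I)) = θ := by
  rw [arg_exp_mul_I, toIocMod_eq_self]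
  exact ⟨hθ.1, by linarith [hθ.2]⟩

lemma im_cpow_ofReal_neg_s14 {z : ℂ} (hz : z ≠ 0) {s : ℝ} (hlo : -Real.pi < arg z * s)
    (hhi : arg z * s < 0) : (z ^ (s : ℂ)).im < 0 := by
  rw [cpow_ofReal_im]
  have hsin : Real.sin (arg z * s) < 0 := by
    rw [← neg_pos, ← Real.sin_neg]
    exact Real.sin_pos_of_pos_of_lt_pi (by linarith) (by linarith)
  exact mul_neg_of_pos_of_neg (Real.rpow_pos_of_pos (norm_pos_iff.2 hz) s) hsin

/-- The lower bound: rotating by `e^{i(π - θ)}` sends `1 - r e^{iθ}` to `e^{i(π - θ)} + r`, which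
lies in the upper half-plane. -/
lemma arg_one_sub_mul_exp_mem_Ioo {θ r : ℝ} (hθ0 : 0 < θ) (hθπ : θ < Real.pi) (hr : 0 < r) :
    arg (1 - exp (θ * I) * r) ∈ Set.Ioo (θ - Real.pi) 0 := by
  set z := 1 - exp (θ * I) * r
  have hsinθ : 0 < Real.sin θ := Real.sin_pos_of_pos_of_lt_pi hθ0 hθπ
  have hz_im : z.im = -(Real.sin θ * r) := by
    simp only [z, sub_im, one_im, mul_im, exp_ofReal_mul_I_re, exp_ofReal_mul_I_im, ofReal_re,
      ofReal_im]
    ring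
  have hz_neg : arg z < 0 := arg_neg_iff.2 (by rw [hz_im]; nlinarith)
  have hz : z ≠ 0 := fun h => by simp [h] at hz_neg
  set u := exp ((Real.pi - θ : ℝ) * I)
  have hu_arg : arg u = Real.pi - θ := arg_exp_mul_I_of_mem_Ioc ⟨by linarith, by linarith⟩
  have hzu : z * u = u + r := by
    have : exp (θ * I) * u = -1 := by
      rw [← exp_add, ← add_mul, ← ofReal_add, add_sub_cancel, exp_pi_mul_I]
    linear_combination (-r) * this
  have hzu_im : 0 < (z * u).im := by
    rw [hzu, add_im, ofReal_im, add_zero, exp_ofReal_mul_I_im, Real.sin_pi_sub]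
    exact hsinθ
  have hzu_arg : arg (z * u) = arg z + (Real.pi - θ) := by
    rw [arg_mul hz (exp_ne_zero _), hu_arg]
    constructor <;> linarith [neg_pi_lt_arg z]
  have hzu_pos : 0 < arg (z * u) := by
    refine lt_of_le_of_ne (arg_nonneg_iff.2 hzu_im.le) fun h => ?_
    exact hzu_im.ne' (arg_eq_zero_iff.1 h.symm).2
  exact ⟨by linarith, hz_neg⟩

end Complex

theorem stmt_14 (p : ℝ) (hp : 1 < p) (q : ℝ) (hq : q = p / (p - 1)) :
    ∀ x ∈ Set.Ioo (0 : ℝ) 1,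
      0 < -(1 / Real.pi) * x ^ (p - 1) *
        ((1 - Complex.exp (Real.pi / q * I) * ((1 / x - 1) ^ (1 / q) : ℝ))
          ^ ((p - 1 : ℝ) : ℂ)).im := by
  rintro x ⟨hx0, hx1⟩
  have hπ := Real.pi_pos
  have hp1 : 0 < p - 1 := by linarith
  have hq1 : 1 < q := hq ▸ (one_lt_div hp1).2 (by linarith)
  have hr : 0 < (1 / x - 1) ^ (1 / q) :=
    Real.rpow_pos_of_pos (by linarith [one_lt_one_div hx0 hx1]) _
  obtain ⟨harg_lo, harg_hi⟩ := arg_one_sub_mul_exp_mem_Ioo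
    (div_pos hπ (by linarith)) (div_lt_self hπ hq1) hr
  push_cast at harg_lo harg_hi
  set z := 1 - exp (Real.pi / q * I) * ((1 / x - 1) ^ (1 / q) : ℝ)
  have hz : z ≠ 0 := fun h => by simp [h] at harg_hi
  have hlo : -Real.pi < arg z * (p - 1) := by
    have hprod : (Real.pi / q - Real.pi) * (p - 1) = -(Real.pi / q) := by
      rw [hq]; field_simp; ring
    linarith [mul_lt_mul_of_pos_right harg_lo hp1, div_lt_self hπ hq1]
  have him := im_cpow_ofReal_neg_s14 hz hlo (mul_neg_of_neg_of_pos harg_hi hp1)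
  have hcoef : -(1 / Real.pi) * x ^ (p - 1) < 0 :=
    mul_neg_of_neg_of_pos (neg_neg_of_pos (one_div_pos.2 hπ)) (Real.rpow_pos_of_pos hx0 _)
  exact mul_pos_of_neg_of_neg hcoef him
end

section
/- Let p > 1 be an integer and q = p/(p-1). Define m_{2k}^{(p)} = 2 ∑_{j=0}^{p-1} (-1)^{j+p} C(p-1,j) C(j(p-1)/p, 2k+p) for k ≥ 0, where C(x,m) is the generalized binomial coefficient. Then m_0^{(p)} = ((p-1)/p)^p. -/
/-!
By the binomial theorem, `∑ j, (-1)^(j+p-1) C(p-1, j) C(j q, p)` is the coefficient of `X^p` in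
`((1 + X)^q - 1)^(p-1)`. Since `(1 + X)^q - 1 = X (q + C(q, 2) X + ⋯)`, that coefficient is
`(p-1) q^(p-2) C(q, 2)`, and `q - 1 = -1/p` turns `-2 (p-1) q^(p-2) C(q, 2)` into `q^p`.
-/

/-- Generalized binomial coefficient `C(x, m) = x(x-1)⋯(x-m+1)/m!`. -/
noncomputable def genBinom (x : ℝ) (m : ℕ) : ℝ :=
  (∏ i ∈ Finset.range m, (x - i)) / (Nat.factorial m)

open Finset

theorem genBinom_eq_ringChoose (x : ℝ) (m : ℕ) : genBinom x m = Ring.choose x m := by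
  rw [Ring.choose_eq_smul, ← Polynomial.aeval_eq_smeval, Polynomial.aeval_def,
    ← Polynomial.eval_map, descPochhammer_map, descPochhammer_eval_eq_prod_range, genBinom,
    smul_eq_mul, div_eq_inv_mul]

namespace PowerSeries

variable {R : Type*} [CommRing R] [BinomialRing R]

theorem binomialSeries_natCast_mul (n : ℕ) (r : R) :
    binomialSeries R ((n : R) * r) = binomialSeries R r ^ n := by
  induction n with
  | zero => simp
  | succ n ih => rw [Nat.cast_succ, add_one_mul, binomialSeries_add, ih, pow_succ]

theorem coeff_binomialSeries_sub_one_pow (r : R) (n m : ℕ) :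
    coeff m ((binomialSeries R r - 1) ^ n) =
      ∑ j ∈ range (n + 1), (-1) ^ (j + n) * (n.choose j : R) * Ring.choose ((j : R) * r) m := by
  simp only [sub_pow, one_pow, mul_one, ← binomialSeries_natCast_mul, map_sum]
  refine sum_congr rfl fun j _ => ?_
  rw [show ((-1 : R⟦X⟧) ^ (j + n) * binomialSeries R ((j : R) * r) * (n.choose j : R⟦X⟧)) =
      C ((-1) ^ (j + n) * (n.choose j : R)) * binomialSeries R ((j : R) * r) by simp; ring,
    coeff_C_mul, binomialSeries_coeff, smul_eq_mul, mul_one]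

theorem coeff_succ_binomialSeries_sub_one_pow (r : R) (n : ℕ) :
    coeff (n + 1) ((binomialSeries R r - 1) ^ n) = n * Ring.choose r 2 * r ^ (n - 1) := by
  set φ : R⟦X⟧ := mk fun k => coeff (k + 1) (binomialSeries R r)
  have hsplit : binomialSeries R r - 1 = φ * X := by
    rw [sub_eq_iff_eq_add, eq_shift_mul_X_add_const (binomialSeries R r),
      binomialSeries_constantCoeff, map_one]
  have hφ₀ : constantCoeff φ = r := by
    rw [← coeff_zero_eq_constantCoeff_apply]
    simp [φ]
  have hφ₁ : coeff 1 φ = Ring.choose r 2 := by simp [φ]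
  rw [hsplit, mul_pow, add_comm, coeff_mul_X_pow, coeff_one_pow, hφ₀, hφ₁]

end PowerSeries

theorem stmt_19 (p : ℕ) (hp : 1 < p) :
    2 * ∑ j ∈ Finset.range p, (-1 : ℝ) ^ (j + p) * ((p - 1).choose j : ℝ) *
        genBinom ((j : ℝ) * ((p : ℝ) - 1) / p) (2 * 0 + p) =
      (((p : ℝ) - 1) / p) ^ p := by
  obtain ⟨n, rfl⟩ : ∃ n, p = n + 2 := ⟨p - 2, by omega⟩
  set q : ℝ := ((n + 2 : ℕ) - 1 : ℝ) / (n + 2 : ℕ)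
  have hsum : ∑ j ∈ range (n + 2), (-1 : ℝ) ^ (j + (n + 2)) * ((n + 2 - 1).choose j : ℝ) *
        genBinom ((j : ℝ) * ((n + 2 : ℕ) - 1) / (n + 2 : ℕ)) (2 * 0 + (n + 2)) =
      -PowerSeries.coeff (n + 2) ((PowerSeries.binomialSeries ℝ q - 1) ^ (n + 1)) := by
    rw [PowerSeries.coeff_binomialSeries_sub_one_pow, ← sum_neg_distrib]
    refine sum_congr rfl fun j _ => ?_
    rw [genBinom_eq_ringChoose, mul_div_assoc, show n + 2 - 1 = n + 1 from rfl,
      mul_zero, zero_add]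
    ring
  have hchoose : Ring.choose q 2 = q * (q - 1) / 2 := by
    rw [← genBinom_eq_ringChoose]
    simp [genBinom, prod_range_succ]
  have hq : -((n + 1 : ℝ) * (q - 1)) = q := by
    simp only [q]
    push_cast
    field_simp
    ring
  rw [hsum, PowerSeries.coeff_succ_binomialSeries_sub_one_pow, hchoose, Nat.add_sub_cancel]
  change _ = q ^ (n + 2)
  push_cast
  linear_combination q ^ (n + 1) * hq
end
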